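/- arXiv:2602.12494 — 11 statements merged into one kernel-verified Lean document; each statement's English description precedes it below -/
import Mathlib

section
/- For two indeterminates u1, u2, let h_k = sum_{i=0}^k u1^{k-i} u2^i denote the complete homogeneous symmetric polynomial of degree k. Then for all nonnegative integers i and j, h_i * h_j = sum_{k=0}^{min(i,j)} (u1*u2)^(min(i,j)-k) * h_{|j-i|+2k}. -/
/-- The complete homogeneous symmetric polynomial of degree `k` in `u1, u2`. -/
def ch {R : Type*} [CommRing R] (u1 u2 : R) (k : ℕ) : R :=
  ∑ i ∈ Finset.range (k + 1), u1 ^ (k - i) * u2 ^ i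

lemma ch_comm {R : Type*} [CommRing R] (u1 u2 : R) (k : ℕ) :
    ch u1 u2 k = ch u2 u1 k := by
  unfold ch
  rw [← Finset.sum_range_reflect]
  apply Finset.sum_congr rfl
  intro i hi
  rw [Finset.mem_range] at hi
  have h1 : k + 1 - 1 - i = k - i := by omega
  have h2 : k - (k - i) = i := by omega
  rw [h1, h2, mul_comm]

lemma ch_succ_left {R : Type*} [CommRing R] (u1 u2 : R) (m : ℕ) :
    ch u1 u2 (m + 1) = u1 * ch u1 u2 m + u2 ^ (m + 1) := by
  unfold ch
  rw [Finset.sum_range_succ, Finset.mul_sum]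
  congr 1
  · apply Finset.sum_congr rfl
    intro i hi
    rw [Finset.mem_range] at hi
    have : m + 1 - i = (m - i) + 1 := by omega
    rw [this]; ring
  · simp

lemma ch_succ_right {R : Type*} [CommRing R] (u1 u2 : R) (m : ℕ) :
    ch u1 u2 (m + 1) = u2 * ch u1 u2 m + u1 ^ (m + 1) := by
  rw [ch_comm, ch_succ_left, ch_comm u2 u1]

lemma ch_zero {R : Type*} [CommRing R] (u1 u2 : R) : ch u1 u2 0 = 1 := by
  simp [ch]

lemma ch_split {R : Type*} [CommRing R] (u1 u2 : R) (m n : ℕ) :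
    ch u1 u2 (m + n + 1) = u1 ^ (n + 1) * ch u1 u2 m + u2 ^ (m + 1) * ch u1 u2 n := by
  induction n with
  | zero => rw [ch_succ_left, ch_zero]; ring
  | succ n ih =>
    have : m + (n + 1) + 1 = (m + n + 1) + 1 := by omega
    rw [this, ch_succ_left, ih, ch_succ_left u1 u2 n]
    ring

lemma ch_key {R : Type*} [CommRing R] (u1 u2 : R) (a c : ℕ) :
    ch u1 u2 (a + 1) * ch u1 u2 (a + 1 + c) =
      ch u1 u2 a * ch u1 u2 (a + 2 + c) + (u1 * u2) ^ (a + 1) * ch u1 u2 c := by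
  have h1 : a + 1 + c = a + c + 1 := by omega
  have h2 : a + 2 + c = (a + 1) + c + 1 := by omega
  rw [h1, h2, ch_split, ch_split, ch_succ_right u1 u2 a]
  ring

lemma ch_mul_aux {R : Type*} [CommRing R] (u1 u2 : R) :
    ∀ i j : ℕ, i ≤ j → ch u1 u2 i * ch u1 u2 j =
      ∑ k ∈ Finset.range (i + 1), (u1 * u2) ^ (i - k) * ch u1 u2 (j - i + 2 * k) := by
  intro i
  induction i with
  | zero => intro j _; simp [ch_zero]
  | succ i ih =>
    intro j hj
    rw [Finset.sum_range_succ']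
    have hc : ∀ k, j - (i + 1) + 2 * (k + 1) = (j + 1) - i + 2 * k := by
      intro k; omega
    have hsum : (∑ k ∈ Finset.range (i + 1),
        (u1 * u2) ^ (i + 1 - (k + 1)) * ch u1 u2 (j - (i + 1) + 2 * (k + 1))) =
        ch u1 u2 i * ch u1 u2 (j + 1) := by
      rw [ih (j + 1) (by omega)]
      apply Finset.sum_congr rfl
      intro k hk
      rw [hc k]
      congr 2
      omega
    rw [hsum]
    have hkey := ch_key u1 u2 i (j - (i + 1))
    have e1 : i + 1 + (j - (i + 1)) = j := by omega
    have e2 : i + 2 + (j - (i + 1)) = j + 1 := by omega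
    rw [e1, e2] at hkey
    rw [hkey]
    simp [mul_comm]

theorem ch_mul {R : Type*} [CommRing R] (u1 u2 : R) (i j : ℕ) :
    ch u1 u2 i * ch u1 u2 j =
      ∑ k ∈ Finset.range (min i j + 1),
        (u1 * u2) ^ (min i j - k) * ch u1 u2 (max i j - min i j + 2 * k) := by
  rcases le_total i j with h | h
  · rw [min_eq_left h, max_eq_right h]
    exact ch_mul_aux u1 u2 i j h
  · rw [min_eq_right h, max_eq_left h, mul_comm]
    exact ch_mul_aux u1 u2 j i h
end

section
/- Let f(z) = (1-u1*z)(1-u2*z)(1-u3*z) be a cubic with a0 = 1 and coefficients a_i the signed elementary symmetric functions, and consider the modified recurrence: err'(0,0) = u1^2+u1*u2+u2^2, err'(0,1) = u1+u2, err'(0,-1) = 1+u3*(u1+u2), with err'(n+1,0) = err'(n,0)*(err'(n,-1)*err'(n,0) - err'(n,-1)*err'(n,1)*u1*u2*u3 + err'(n,0)^2*u3^(2^(n+1))), err'(n+1,1) = err'(n,0)*(err'(n,-1)*err'(n,1) + err'(n,-1)*err'(n,0)*u3 - err'(n,-1)*err'(n,1)*(u1+u2)*u3 + err'(n,0)*err'(n,1)*u3^(2^(n+1))),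 and err'(n+1,-1) = err'(n,-1)*(err'(n,-1)^2 - err'(n,-1)^2*(u1+u2)*u3 + err'(n,-1)^2*u1*u2*u3^2 + 3*err'(n,-1)*err'(n,0)*u3^(2^(n+1)) + 2*err'(n,0)^2*u3^(2^(n+2)) - err'(n,-1)*err'(n,0)*(u1+u2)*u3^(1+2^(n+1)) - err'(n,-1)*err'(n,1)*u1*u2*u3^(1+2^(n+1))). Then, viewing these as polynomials in u3 with coefficients in Z[u1,u2] (u1, u2 indeterminates), the degree in u3 of err'(n,-1) is 2*3^n - 1, and the degrees in u3 of err'(n,0) and err'(n,1) are both 2*(3^n - 2^n). -/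
open MvPolynomial

/-- The triple `(err'(n,0), err'(n,1), err'(n,-1))` of polynomials in `ℤ[u1,u2,u3]`,
where `u1 = X 0`, `u2 = X 1`, `u3 = X 2`. -/
noncomputable def err' : ℕ →
    MvPolynomial (Fin 3) ℤ × MvPolynomial (Fin 3) ℤ × MvPolynomial (Fin 3) ℤ
  | 0 => (X 0 ^ 2 + X 0 * X 1 + X 1 ^ 2, X 0 + X 1, 1 + X 2 * (X 0 + X 1))
  | n + 1 =>
      let a := (err' n).1       -- err'(n,0)
      let b := (err' n).2.1     -- err'(n,1)
      let c := (err' n).2.2     -- err'(n,-1)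
      (a * (c * a - c * b * (X 0) * (X 1) * (X 2) + a ^ 2 * (X 2) ^ (2 ^ (n + 1))),
       a * (c * b + c * a * X 2 - c * b * (X 0 + X 1) * X 2 +
         a * b * (X 2) ^ (2 ^ (n + 1))),
       c * (c ^ 2 - c ^ 2 * (X 0 + X 1) * X 2 + c ^ 2 * X 0 * X 1 * (X 2) ^ 2 +
         3 * c * a * (X 2) ^ (2 ^ (n + 1)) + 2 * a ^ 2 * (X 2) ^ (2 ^ (n + 2)) -
         c * a * (X 0 + X 1) * (X 2) ^ (1 + 2 ^ (n + 1)) -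
         c * b * X 0 * X 1 * (X 2) ^ (1 + 2 ^ (n + 1))))

noncomputable def φ : MvPolynomial (Fin 3) ℤ →ₐ[ℤ] Polynomial ℤ := aeval ![1, 0, Polynomial.X]

lemma phi_X0 : φ (X 0) = 1 := by simp [φ]
lemma phi_X1 : φ (X 1) = 0 := by simp [φ]
lemma phi_X2 : φ (X 2) = Polynomial.X := by simp [φ]

lemma natDegree_phi_le (p : MvPolynomial (Fin 3) ℤ) : (φ p).natDegree ≤ degreeOf 2 p := by
  conv_lhs => rw [p.as_sum]
  rw [map_sum]
  apply Polynomial.natDegree_sum_le_of_forall_le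
  intro m hm
  rw [φ, aeval_monomial]
  refine (Polynomial.natDegree_mul_le).trans ?_
  have h1 : (algebraMap ℤ (Polynomial ℤ) (coeff m p)).natDegree = 0 := Polynomial.natDegree_C _
  rw [h1, zero_add]
  have h2 : (m.prod fun i k => (![1, 0, Polynomial.X] : Fin 3 → Polynomial ℤ) i ^ k).natDegree ≤ m 2 := by
    refine (Polynomial.natDegree_prod_le _ _).trans ?_
    have : ∀ i ∈ m.support, ((![1, 0, Polynomial.X] : Fin 3 → Polynomial ℤ) i ^ m i).natDegree
        ≤ if i = 2 then m 2 else 0 := by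
      intro i _
      fin_cases i
      · simp
      · simp only [Matrix.cons_val_one, Matrix.head_cons]
        rcases Nat.eq_zero_or_pos (m 1) with h | h
        · simp [h]
        · simp [zero_pow h.ne', *]
      · simp
    refine (Finset.sum_le_sum this).trans ?_
    rw [Finset.sum_ite_eq' m.support 2 (fun _ => m 2)]
    split <;> simp
  exact h2.trans (by rw [degreeOf_eq_sup]; exact Finset.le_sup (f := fun m => m 2) hm)

section Step

open Polynomial

variable {n : ℕ} {a b c : Polynomial ℤ}

lemma stepA (ha : a.Monic) (hb : b.Monic) (hc : c.Monic)
    (hda : a.natDegree + 2 ^ (n + 1) = 2 * 3 ^ n)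
    (hdc : c.natDegree + 1 = 2 * 3 ^ n) :
    (a * (c * a + a ^ 2 * Polynomial.X ^ (2 ^ (n + 1)))).Monic ∧
    (a * (c * a + a ^ 2 * Polynomial.X ^ (2 ^ (n + 1)))).natDegree + 2 ^ (n + 2) = 2 * 3 ^ (n + 1) := by
  set e := 2 ^ (n + 1) with he
  have hq : (a ^ 2 * Polynomial.X ^ e).Monic := (ha.pow 2).mul (monic_X_pow e)
  have hqd : (a ^ 2 * Polynomial.X ^ e).natDegree = 2 * a.natDegree + e := by
    rw [(ha.pow 2).natDegree_mul (monic_X_pow e), ha.natDegree_pow, natDegree_X_pow]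
  have hpd : (c * a).natDegree = c.natDegree + a.natDegree := hc.natDegree_mul ha
  have hlt : (c * a).degree < (a ^ 2 * Polynomial.X ^ e).degree := by
    rw [degree_eq_natDegree (hc.mul ha).ne_zero, degree_eq_natDegree hq.ne_zero, hpd, hqd]
    exact_mod_cast (by omega : c.natDegree + a.natDegree < 2 * a.natDegree + e)
  have hm : (c * a + a ^ 2 * Polynomial.X ^ e).Monic := hq.add_of_right hlt
  have hd : (c * a + a ^ 2 * Polynomial.X ^ e).natDegree = 2 * a.natDegree + e := by
    rw [natDegree_add_eq_right_of_degree_lt hlt, hqd]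
  refine ⟨ha.mul hm, ?_⟩
  rw [ha.natDegree_mul hm, hd]
  have h2 : (2:ℕ) ^ (n + 2) = 2 ^ (n + 1) * 2 := pow_succ 2 (n+1)
  have h3 : (3:ℕ) ^ (n + 1) = 3 ^ n * 3 := pow_succ 3 n
  omega

lemma stepB (ha : a.Monic) (hb : b.Monic) (hc : c.Monic)
    (hda : a.natDegree + 2 ^ (n + 1) = 2 * 3 ^ n)
    (hdb : b.natDegree + 2 ^ (n + 1) = 2 * 3 ^ n)
    (hdc : c.natDegree + 1 = 2 * 3 ^ n) :
    (a * (c * b + c * (a - b) * Polynomial.X + a * b * Polynomial.X ^ (2 ^ (n + 1)))).Monic ∧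
    (a * (c * b + c * (a - b) * Polynomial.X + a * b * Polynomial.X ^ (2 ^ (n + 1)))).natDegree
      + 2 ^ (n + 2) = 2 * 3 ^ (n + 1) := by
  set e := 2 ^ (n + 1) with he
  have hq : (a * b * Polynomial.X ^ e).Monic := (ha.mul hb).mul (monic_X_pow e)
  have hqd : (a * b * Polynomial.X ^ e).natDegree = a.natDegree + b.natDegree + e := by
    rw [(ha.mul hb).natDegree_mul (monic_X_pow e), ha.natDegree_mul hb, natDegree_X_pow]
  have hab : a.natDegree = b.natDegree := by omega
  have hdeq : a.degree = b.degree := by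
    rw [degree_eq_natDegree ha.ne_zero, degree_eq_natDegree hb.ne_zero]
    exact_mod_cast hab
  have hsub : (a - b).degree < (a.natDegree : WithBot ℕ) := by
    have := degree_sub_lt hdeq ha.ne_zero (by rw [ha.leadingCoeff, hb.leadingCoeff])
    rwa [degree_eq_natDegree ha.ne_zero] at this
  have h2 : (c * (a - b) * Polynomial.X).degree < ((c.natDegree + 1 + a.natDegree : ℕ) : WithBot ℕ) := by
    have : c * (a - b) * Polynomial.X = (c * Polynomial.X) * (a - b) := by ring
    rw [this, degree_mul]
    have hcx : (c * Polynomial.X).degree = ((c.natDegree + 1 : ℕ) : WithBot ℕ) := by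
      rw [degree_eq_natDegree (hc.mul monic_X).ne_zero, hc.natDegree_mul monic_X, natDegree_X]
    rw [hcx]
    calc ((c.natDegree + 1 : ℕ) : WithBot ℕ) + (a - b).degree
        < ((c.natDegree + 1 : ℕ) : WithBot ℕ) + (a.natDegree : ℕ) :=
          WithBot.add_lt_add_left (by exact_mod_cast WithBot.coe_ne_bot) hsub
      _ = ((c.natDegree + 1 + a.natDegree : ℕ) : WithBot ℕ) := by push_cast; ring
  have h1 : (c * b).degree < ((a.natDegree + b.natDegree + e : ℕ) : WithBot ℕ) := by
    calc (c * b).degree ≤ ((c.natDegree + b.natDegree : ℕ) : WithBot ℕ) := by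
          refine (degree_mul_le _ _).trans ?_
          rw [degree_eq_natDegree hc.ne_zero, degree_eq_natDegree hb.ne_zero]
          exact_mod_cast le_rfl
      _ < _ := by exact_mod_cast (by omega : c.natDegree + b.natDegree < a.natDegree + b.natDegree + e)
  have hlt : (c * b + c * (a - b) * Polynomial.X).degree < (a * b * Polynomial.X ^ e).degree := by
    rw [degree_eq_natDegree hq.ne_zero, hqd]
    refine (degree_add_le _ _).trans_lt (max_lt h1 ?_)
    refine h2.trans_le ?_
    exact_mod_cast (by omega : c.natDegree + 1 + a.natDegree ≤ a.natDegree + b.natDegree + e)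
  have hm : (c * b + c * (a - b) * Polynomial.X + a * b * Polynomial.X ^ e).Monic :=
    hq.add_of_right hlt
  have hd : (c * b + c * (a - b) * Polynomial.X + a * b * Polynomial.X ^ e).natDegree
      = a.natDegree + b.natDegree + e := by
    rw [natDegree_add_eq_right_of_degree_lt hlt, hqd]
  refine ⟨ha.mul hm, ?_⟩
  rw [ha.natDegree_mul hm, hd]
  have h2' : (2:ℕ) ^ (n + 2) = 2 ^ (n + 1) * 2 := pow_succ 2 (n+1)
  have h3' : (3:ℕ) ^ (n + 1) = 3 ^ n * 3 := pow_succ 3 n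
  omega

lemma stepC (ha : a.Monic) (hb : b.Monic) (hc : c.Monic)
    (hda : a.natDegree + 2 ^ (n + 1) = 2 * 3 ^ n)
    (hdc : c.natDegree + 1 = 2 * 3 ^ n) :
    (c * (a ^ 2 * (Polynomial.X ^ (2 ^ (n + 1))) ^ 2 +
      ((a * Polynomial.X ^ (2 ^ (n + 1))) * (a * Polynomial.X ^ (2 ^ (n + 1)) - c * Polynomial.X) +
       c ^ 2 * (1 - Polynomial.X) + 3 * c * a * Polynomial.X ^ (2 ^ (n + 1))))).Monic ∧
    (c * (a ^ 2 * (Polynomial.X ^ (2 ^ (n + 1))) ^ 2 +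
      ((a * Polynomial.X ^ (2 ^ (n + 1))) * (a * Polynomial.X ^ (2 ^ (n + 1)) - c * Polynomial.X) +
       c ^ 2 * (1 - Polynomial.X) + 3 * c * a * Polynomial.X ^ (2 ^ (n + 1))))).natDegree + 1
      = 2 * 3 ^ (n + 1) := by
  set e := 2 ^ (n + 1) with he
  have hq : (a ^ 2 * (Polynomial.X ^ e) ^ 2).Monic := (ha.pow 2).mul ((monic_X_pow e).pow 2)
  have hqd : (a ^ 2 * (Polynomial.X ^ e) ^ 2).natDegree = 2 * a.natDegree + 2 * e := by
    rw [(ha.pow 2).natDegree_mul ((monic_X_pow e).pow 2), ha.natDegree_pow,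
      (monic_X_pow e).natDegree_pow, natDegree_X_pow]
  have haxe : (a * Polynomial.X ^ e).Monic := ha.mul (monic_X_pow e)
  have haxed : (a * Polynomial.X ^ e).natDegree = a.natDegree + e := by
    rw [ha.natDegree_mul (monic_X_pow e), natDegree_X_pow]
  have hcx : (c * Polynomial.X).Monic := hc.mul monic_X
  have hcxd : (c * Polynomial.X).natDegree = c.natDegree + 1 := by
    rw [hc.natDegree_mul monic_X, natDegree_X]
  have heq : a.natDegree + e = c.natDegree + 1 := by omega
  -- p1
  have hdeq : (a * Polynomial.X ^ e).degree = (c * Polynomial.X).degree := by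
    rw [degree_eq_natDegree haxe.ne_zero, degree_eq_natDegree hcx.ne_zero, haxed, hcxd]
    exact_mod_cast heq
  have hsub : (a * Polynomial.X ^ e - c * Polynomial.X).degree
      < ((a.natDegree + e : ℕ) : WithBot ℕ) := by
    have := degree_sub_lt hdeq haxe.ne_zero (by rw [haxe.leadingCoeff, hcx.leadingCoeff])
    rwa [degree_eq_natDegree haxe.ne_zero, haxed] at this
  have hp1 : ((a * Polynomial.X ^ e) * (a * Polynomial.X ^ e - c * Polynomial.X)).degree
      < ((2 * a.natDegree + 2 * e : ℕ) : WithBot ℕ) := by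
    rw [degree_mul, degree_eq_natDegree haxe.ne_zero, haxed]
    calc ((a.natDegree + e : ℕ) : WithBot ℕ) + (a * Polynomial.X ^ e - c * Polynomial.X).degree
        < ((a.natDegree + e : ℕ) : WithBot ℕ) + ((a.natDegree + e : ℕ) : WithBot ℕ) :=
          WithBot.add_lt_add_left (by exact_mod_cast WithBot.coe_ne_bot) hsub
      _ = ((2 * a.natDegree + 2 * e : ℕ) : WithBot ℕ) := by push_cast; ring
  -- p2
  have hp2 : (c ^ 2 * (1 - Polynomial.X)).degree < ((2 * a.natDegree + 2 * e : ℕ) : WithBot ℕ) := by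
    have h1x : (1 - Polynomial.X : Polynomial ℤ).degree = 1 := by
      rw [show (1 - Polynomial.X : Polynomial ℤ) = -(Polynomial.X - Polynomial.C 1) by
        rw [map_one]; ring, degree_neg, degree_X_sub_C]
    rw [degree_mul, h1x, degree_eq_natDegree (hc.pow 2).ne_zero, hc.natDegree_pow]
    have : ((2 * c.natDegree : ℕ) : WithBot ℕ) + 1 = ((2 * c.natDegree + 1 : ℕ) : WithBot ℕ) := by
      push_cast; ring
    rw [this]
    exact_mod_cast (by omega : 2 * c.natDegree + 1 < 2 * a.natDegree + 2 * e)
  -- p3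
  have hp3 : (3 * c * a * Polynomial.X ^ e).degree < ((2 * a.natDegree + 2 * e : ℕ) : WithBot ℕ) := by
    calc (3 * c * a * Polynomial.X ^ e).degree
        ≤ (3 : Polynomial ℤ).degree + c.degree + a.degree + (Polynomial.X ^ e : Polynomial ℤ).degree := by
          refine (degree_mul_le _ _).trans ?_
          refine add_le_add ((degree_mul_le _ _).trans (add_le_add ((degree_mul_le _ _)) le_rfl)) le_rfl
      _ ≤ 0 + c.degree + a.degree + (Polynomial.X ^ e : Polynomial ℤ).degree := by
          refine add_le_add (add_le_add (add_le_add ?_ le_rfl) le_rfl) le_rfl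
          rw [← map_ofNat Polynomial.C 3]
          exact degree_C_le
      _ = ((c.natDegree + a.natDegree + e : ℕ) : WithBot ℕ) := by
          rw [degree_eq_natDegree hc.ne_zero, degree_eq_natDegree ha.ne_zero, degree_X_pow]
          push_cast; ring
      _ < _ := by exact_mod_cast (by omega : c.natDegree + a.natDegree + e < 2 * a.natDegree + 2 * e)
  have hlt : ((a * Polynomial.X ^ e) * (a * Polynomial.X ^ e - c * Polynomial.X) +
      c ^ 2 * (1 - Polynomial.X) + 3 * c * a * Polynomial.X ^ e).degree
      < (a ^ 2 * (Polynomial.X ^ e) ^ 2).degree := by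
    rw [degree_eq_natDegree hq.ne_zero, hqd]
    exact (degree_add_le _ _).trans_lt (max_lt ((degree_add_le _ _).trans_lt (max_lt hp1 hp2)) hp3)
  have hm : (a ^ 2 * (Polynomial.X ^ e) ^ 2 +
      ((a * Polynomial.X ^ e) * (a * Polynomial.X ^ e - c * Polynomial.X) +
       c ^ 2 * (1 - Polynomial.X) + 3 * c * a * Polynomial.X ^ e)).Monic := hq.add_of_left hlt
  have hd : (a ^ 2 * (Polynomial.X ^ e) ^ 2 +
      ((a * Polynomial.X ^ e) * (a * Polynomial.X ^ e - c * Polynomial.X) +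
       c ^ 2 * (1 - Polynomial.X) + 3 * c * a * Polynomial.X ^ e)).natDegree
      = 2 * a.natDegree + 2 * e := by
    rw [natDegree_add_eq_left_of_degree_lt hlt, hqd]
  refine ⟨hc.mul hm, ?_⟩
  rw [hc.natDegree_mul hm, hd]
  have h2' : (2:ℕ) ^ (n + 1) = 2 ^ n * 2 := pow_succ 2 n
  have h3' : (3:ℕ) ^ (n + 1) = 3 ^ n * 3 := pow_succ 3 n
  omega

end Step

lemma phiA (n : ℕ) : φ (err' (n+1)).1 =
    φ (err' n).1 * (φ (err' n).2.2 * φ (err' n).1 +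
      (φ (err' n).1) ^ 2 * Polynomial.X ^ (2 ^ (n + 1))) := by
  have h : (err' (n+1)).1 = (err' n).1 * ((err' n).2.2 * (err' n).1
      - (err' n).2.2 * (err' n).2.1 * (X 0) * (X 1) * (X 2)
      + (err' n).1 ^ 2 * (X 2) ^ (2 ^ (n + 1))) := rfl
  rw [h]
  simp only [map_mul, map_add, map_sub, map_pow, phi_X0, phi_X1, phi_X2]
  ring

lemma phiB (n : ℕ) : φ (err' (n+1)).2.1 =
    φ (err' n).1 * (φ (err' n).2.2 * φ (err' n).2.1 +
      φ (err' n).2.2 * (φ (err' n).1 - φ (err' n).2.1) * Polynomial.X +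
      φ (err' n).1 * φ (err' n).2.1 * Polynomial.X ^ (2 ^ (n + 1))) := by
  have h : (err' (n+1)).2.1 = (err' n).1 * ((err' n).2.2 * (err' n).2.1
      + (err' n).2.2 * (err' n).1 * X 2 - (err' n).2.2 * (err' n).2.1 * (X 0 + X 1) * X 2
      + (err' n).1 * (err' n).2.1 * (X 2) ^ (2 ^ (n + 1))) := rfl
  rw [h]
  simp only [map_mul, map_add, map_sub, map_pow, phi_X0, phi_X1, phi_X2]
  ring

lemma phiC (n : ℕ) : φ (err' (n+1)).2.2 =
    φ (err' n).2.2 * ((φ (err' n).1) ^ 2 * (Polynomial.X ^ (2 ^ (n + 1))) ^ 2 +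
      ((φ (err' n).1 * Polynomial.X ^ (2 ^ (n + 1))) *
        (φ (err' n).1 * Polynomial.X ^ (2 ^ (n + 1)) - φ (err' n).2.2 * Polynomial.X) +
       (φ (err' n).2.2) ^ 2 * (1 - Polynomial.X) +
       3 * φ (err' n).2.2 * φ (err' n).1 * Polynomial.X ^ (2 ^ (n + 1)))) := by
  have h : (err' (n+1)).2.2 = (err' n).2.2 * ((err' n).2.2 ^ 2
      - (err' n).2.2 ^ 2 * (X 0 + X 1) * X 2 + (err' n).2.2 ^ 2 * X 0 * X 1 * (X 2) ^ 2
      + 3 * (err' n).2.2 * (err' n).1 * (X 2) ^ (2 ^ (n + 1))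
      + 2 * (err' n).1 ^ 2 * (X 2) ^ (2 ^ (n + 2))
      - (err' n).2.2 * (err' n).1 * (X 0 + X 1) * (X 2) ^ (1 + 2 ^ (n + 1))
      - (err' n).2.2 * (err' n).2.1 * X 0 * X 1 * (X 2) ^ (1 + 2 ^ (n + 1))) := rfl
  rw [h]
  simp only [map_mul, map_add, map_sub, map_pow, map_one, map_ofNat, phi_X0, phi_X1, phi_X2]
  rw [show (2:ℕ) ^ (n + 2) = 2 ^ (n + 1) + 2 ^ (n + 1) by rw [pow_succ, mul_two],
    show (1 : ℕ) + 2 ^ (n + 1) = 2 ^ (n + 1) + 1 by omega]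
  rw [pow_add, pow_add, pow_one]
  ring

section UB

variable {p q : MvPolynomial (Fin 3) ℤ} {m k : ℕ}

lemma ddmul (hp : degreeOf 2 p ≤ m) (hq : degreeOf 2 q ≤ k) : degreeOf 2 (p * q) ≤ m + k :=
  (degreeOf_mul_le _ _ _).trans (add_le_add hp hq)

lemma ddadd (hp : degreeOf 2 p ≤ m) (hq : degreeOf 2 q ≤ m) : degreeOf 2 (p + q) ≤ m :=
  (degreeOf_add_le _ _ _).trans (max_le hp hq)

lemma ddsub (hp : degreeOf 2 p ≤ m) (hq : degreeOf 2 q ≤ m) : degreeOf 2 (p - q) ≤ m := by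
  rw [sub_eq_add_neg]
  exact ddadd hp (by rwa [degreeOf_neg])

lemma ddpow (hp : degreeOf 2 p ≤ m) : degreeOf 2 (p ^ k) ≤ k * m :=
  (degreeOf_pow_le _ _ _).trans (Nat.mul_le_mul_left k hp)

lemma ddX2 : degreeOf 2 (X 2 : MvPolynomial (Fin 3) ℤ) ≤ 1 := by
  rw [degreeOf_X]; simp

lemma ddX0 : degreeOf 2 (X 0 : MvPolynomial (Fin 3) ℤ) ≤ 0 := by
  rw [degreeOf_X]; simp

lemma ddX1 : degreeOf 2 (X 1 : MvPolynomial (Fin 3) ℤ) ≤ 0 := by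
  rw [degreeOf_X]; simp

lemma ddone : degreeOf 2 (1 : MvPolynomial (Fin 3) ℤ) ≤ 0 := by
  rw [← map_one (C : ℤ →+* MvPolynomial (Fin 3) ℤ), degreeOf_C]

lemma ddX2pow : degreeOf 2 ((X 2 : MvPolynomial (Fin 3) ℤ) ^ k) ≤ k := by
  simpa using ddpow (k := k) ddX2

lemma dd3 : degreeOf 2 (3 : MvPolynomial (Fin 3) ℤ) ≤ 0 := by
  rw [← map_ofNat (C : ℤ →+* MvPolynomial (Fin 3) ℤ) 3, degreeOf_C]

lemma dd2 : degreeOf 2 (2 : MvPolynomial (Fin 3) ℤ) ≤ 0 := by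
  rw [← map_ofNat (C : ℤ →+* MvPolynomial (Fin 3) ℤ) 2, degreeOf_C]

end UB

theorem key (n : ℕ) :
    ((φ (err' n).1).Monic ∧ (φ (err' n).2.1).Monic ∧ (φ (err' n).2.2).Monic) ∧
    ((φ (err' n).1).natDegree + 2 ^ (n + 1) = 2 * 3 ^ n ∧
     (φ (err' n).2.1).natDegree + 2 ^ (n + 1) = 2 * 3 ^ n ∧
     (φ (err' n).2.2).natDegree + 1 = 2 * 3 ^ n) ∧
    (degreeOf 2 (err' n).1 + 2 ^ (n + 1) ≤ 2 * 3 ^ n ∧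
     degreeOf 2 (err' n).2.1 + 2 ^ (n + 1) ≤ 2 * 3 ^ n ∧
     degreeOf 2 (err' n).2.2 + 1 ≤ 2 * 3 ^ n) := by
  induction n with
  | zero =>
    have h1 : (err' 0).1 = X 0 ^ 2 + X 0 * X 1 + X 1 ^ 2 := rfl
    have h2 : (err' 0).2.1 = X 0 + X 1 := rfl
    have h3 : (err' 0).2.2 = 1 + X 2 * (X 0 + X 1) := rfl
    have hφ1 : φ (err' 0).1 = 1 := by
      rw [h1]; simp only [map_add, map_mul, map_pow, phi_X0, phi_X1]; ring
    have hφ2 : φ (err' 0).2.1 = 1 := by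
      rw [h2]; simp only [map_add, phi_X0, phi_X1]; ring
    have hφ3 : φ (err' 0).2.2 = Polynomial.X + Polynomial.C 1 := by
      rw [h3]
      simp only [map_add, map_mul, map_one, phi_X0, phi_X1, phi_X2, Polynomial.C_1]
      ring
    refine ⟨⟨by rw [hφ1]; exact Polynomial.monic_one,
            by rw [hφ2]; exact Polynomial.monic_one,
            by rw [hφ3]; exact Polynomial.monic_X_add_C 1⟩,
           ⟨by rw [hφ1, Polynomial.natDegree_one]; norm_num,
            by rw [hφ2, Polynomial.natDegree_one]; norm_num,
            by rw [hφ3, Polynomial.natDegree_X_add_C]; norm_num⟩, ?_, ?_, ?_⟩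
    · rw [h1]
      have : degreeOf 2 (X 0 ^ 2 + X 0 * X 1 + X 1 ^ 2 : MvPolynomial (Fin 3) ℤ) ≤ 0 :=
        ddadd (ddadd (by simpa using ddpow (k := 2) ddX0) (by simpa using ddmul ddX0 ddX1))
          (by simpa using ddpow (k := 2) ddX1)
      omega
    · rw [h2]
      have : degreeOf 2 (X 0 + X 1 : MvPolynomial (Fin 3) ℤ) ≤ 0 := ddadd ddX0 ddX1
      omega
    · rw [h3]
      have : degreeOf 2 (1 + X 2 * (X 0 + X 1) : MvPolynomial (Fin 3) ℤ) ≤ 1 :=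
        ddadd (ddone.trans (by norm_num)) (by simpa using ddmul ddX2 (ddadd ddX0 ddX1))
      omega
  | succ n ih =>
    obtain ⟨⟨ha, hb, hc⟩, ⟨hda, hdb, hdc⟩, ⟨ua, ub, uc⟩⟩ := ih
    have SA := stepA ha hb hc hda hdc
    have SB := stepB ha hb hc hda hdb hdc
    have SC := stepC ha hb hc hda hdc
    rw [← phiA n] at SA
    rw [← phiB n] at SB
    rw [← phiC n] at SC
    set dA := degreeOf 2 (err' n).1
    set dB := degreeOf 2 (err' n).2.1
    set dC := degreeOf 2 (err' n).2.2
    have hA : (err' (n+1)).1 = (err' n).1 * ((err' n).2.2 * (err' n).1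
        - (err' n).2.2 * (err' n).2.1 * (X 0) * (X 1) * (X 2)
        + (err' n).1 ^ 2 * (X 2) ^ (2 ^ (n + 1))) := rfl
    have hB : (err' (n+1)).2.1 = (err' n).1 * ((err' n).2.2 * (err' n).2.1
        + (err' n).2.2 * (err' n).1 * X 2 - (err' n).2.2 * (err' n).2.1 * (X 0 + X 1) * X 2
        + (err' n).1 * (err' n).2.1 * (X 2) ^ (2 ^ (n + 1))) := rfl
    have hC : (err' (n+1)).2.2 = (err' n).2.2 * ((err' n).2.2 ^ 2
        - (err' n).2.2 ^ 2 * (X 0 + X 1) * X 2 + (err' n).2.2 ^ 2 * X 0 * X 1 * (X 2) ^ 2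
        + 3 * (err' n).2.2 * (err' n).1 * (X 2) ^ (2 ^ (n + 1))
        + 2 * (err' n).1 ^ 2 * (X 2) ^ (2 ^ (n + 2))
        - (err' n).2.2 * (err' n).1 * (X 0 + X 1) * (X 2) ^ (1 + 2 ^ (n + 1))
        - (err' n).2.2 * (err' n).2.1 * X 0 * X 1 * (X 2) ^ (1 + 2 ^ (n + 1))) := rfl
    have hp2 : (2:ℕ) ^ (n + 2) = 2 ^ (n + 1) * 2 := pow_succ 2 (n+1)
    have hp3 : (3:ℕ) ^ (n + 1) = 3 ^ n * 3 := pow_succ 3 n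
    have hp3' : (3:ℕ) ^ (n + 2) = 3 ^ (n + 1) * 3 := pow_succ 3 (n+1)
    refine ⟨⟨SA.1, SB.1, SC.1⟩, ⟨SA.2, SB.2, SC.2⟩, ?_, ?_, ?_⟩
    · have : degreeOf 2 (err' (n+1)).1 ≤ dA + max (max (dC + dA) (dC + dB + 1))
          (2 * dA + 2 ^ (n + 1)) := by
        rw [hA]
        refine ddmul le_rfl (ddadd (ddsub ?_ ?_) ?_)
        · exact (ddmul le_rfl le_rfl).trans (by omega)
        · exact (ddmul (ddmul (ddmul (ddmul le_rfl le_rfl) ddX0) ddX1) ddX2).trans (by omega)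
        · exact (ddmul (by simpa using ddpow (k := 2) le_rfl) ddX2pow).trans (by omega)
      omega
    · have : degreeOf 2 (err' (n+1)).2.1 ≤ dA + max (max (max (dC + dB) (dC + dA + 1))
          (dC + dB + 1)) (dA + dB + 2 ^ (n + 1)) := by
        rw [hB]
        refine ddmul le_rfl (ddadd (ddsub (ddadd ?_ ?_) ?_) ?_)
        · exact (ddmul le_rfl le_rfl).trans (by omega)
        · exact (ddmul (ddmul le_rfl le_rfl) ddX2).trans (by omega)
        · exact (ddmul (ddmul (ddmul le_rfl le_rfl) (ddadd ddX0 ddX1)) ddX2).trans (by omega)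
        · exact (ddmul (ddmul le_rfl le_rfl) ddX2pow).trans (by omega)
      omega
    · have : degreeOf 2 (err' (n+1)).2.2 ≤ dC + max (max (max (max (max (max
          (2 * dC) (2 * dC + 1)) (2 * dC + 2)) (dC + dA + 2 ^ (n + 1)))
          (2 * dA + 2 ^ (n + 2))) (dC + dA + (1 + 2 ^ (n + 1))))
          (dC + dB + (1 + 2 ^ (n + 1))) := by
        rw [hC]
        refine ddmul le_rfl (ddsub (ddsub (ddadd (ddadd (ddadd (ddsub ?_ ?_) ?_) ?_) ?_) ?_) ?_)
        · exact (ddpow (k := 2) le_rfl).trans (by omega)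
        · exact (ddmul (ddmul (ddpow (k := 2) le_rfl) (ddadd ddX0 ddX1)) ddX2).trans (by omega)
        · exact (ddmul (ddmul (ddmul (ddpow (k := 2) le_rfl) ddX0) ddX1)
            (ddpow (k := 2) ddX2)).trans (by omega)
        · exact (ddmul (ddmul (ddmul dd3 le_rfl) le_rfl) ddX2pow).trans (by omega)
        · exact (ddmul (ddmul dd2 (ddpow (k := 2) le_rfl)) ddX2pow).trans (by omega)
        · exact (ddmul (ddmul (ddmul le_rfl le_rfl) (ddadd ddX0 ddX1)) ddX2pow).trans (by omega)
        · exact (ddmul (ddmul (ddmul (ddmul le_rfl le_rfl) ddX0) ddX1) ddX2pow).trans (by omega)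
      omega


theorem err'_degreeOf (n : ℕ) :
    degreeOf 2 (err' n).2.2 = 2 * 3 ^ n - 1 ∧
    degreeOf 2 (err' n).1 = 2 * (3 ^ n - 2 ^ n) ∧
    degreeOf 2 (err' n).2.1 = 2 * (3 ^ n - 2 ^ n) := by
  obtain ⟨⟨_, _, _⟩, ⟨hda, hdb, hdc⟩, ⟨ua, ub, uc⟩⟩ := key n
  have la := natDegree_phi_le (err' n).1
  have lb := natDegree_phi_le (err' n).2.1
  have lc := natDegree_phi_le (err' n).2.2
  have h23 : (2:ℕ) ^ n ≤ 3 ^ n := Nat.pow_le_pow_left (by norm_num) n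
  have hp2 : (2:ℕ) ^ (n + 1) = 2 ^ n * 2 := pow_succ 2 n
  refine ⟨by omega, by omega, by omega⟩
end

section
/- Define tau: Z -> Z by tau(i) = |i+1| - 1. Let tCH2 be the free Z-module with basis {th_i : i in Z} and bilinear multiplication defined by: th_{-1} * th_j = 0; for i >= 0, th_i * th_j = sum_{k=0}^i th_{j-i+2k}; and for i < -1, th_i * th_j = -(th_{tau(i)} * th_j). Then for all integers a, b: th_a * th_b - th_{a-1} * th_{b-1} = th_{a+b}. -/
def tau (i : ℤ) : ℤ := |i + 1| - 1

/-- Basis element `th_i` of the free ℤ-module `tCH2 = ℤ →₀ ℤ`. -/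
noncomputable def th (i : ℤ) : ℤ →₀ ℤ := Finsupp.single i 1

/-- Product of basis elements of `tCH2`:
`th_{-1} th_j = 0`; `th_i th_j = ∑_{k=0}^i th_{j-i+2k}` for `i ≥ 0`;
`th_i th_j = -(th_{tau i} th_j)` for `i < -1` (note `tau i ≥ 0` there). -/
noncomputable def thMulB (i j : ℤ) : ℤ →₀ ℤ :=
  if i = -1 then 0
  else if 0 ≤ i then
    ∑ k ∈ Finset.range (i.toNat + 1), Finsupp.single (j - i + 2 * (k : ℤ)) (1 : ℤ)
  else
    -(∑ k ∈ Finset.range ((tau i).toNat + 1),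
        Finsupp.single (j - tau i + 2 * (k : ℤ)) (1 : ℤ))

/-- The bilinear extension of `thMulB` to all of `tCH2`. -/
noncomputable def tmul (x y : ℤ →₀ ℤ) : ℤ →₀ ℤ :=
  x.sum fun i a => y.sum fun j b => (a * b) • thMulB i j

lemma tmul_th (i j : ℤ) : tmul (th i) (th j) = thMulB i j := by
  unfold tmul th
  rw [Finsupp.sum_single_index, Finsupp.sum_single_index] <;> simp

lemma key_s6 (n : ℕ) (c : ℤ) :
    ∑ k ∈ Finset.range (n + 1 + 1), Finsupp.single (c - 2 + 2 * (k : ℤ)) (1 : ℤ)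
      = Finsupp.single (c - 2) 1
        + ∑ k ∈ Finset.range (n + 1), Finsupp.single (c + 2 * (k : ℤ)) (1 : ℤ) := by
  rw [Finset.sum_range_succ', add_comm]
  congr 1
  · congr 1; push_cast; ring
  · apply Finset.sum_congr rfl
    intro k _
    congr 1
    push_cast
    ring

theorem th_mul_sub (a b : ℤ) :
    tmul (th a) (th b) - tmul (th (a - 1)) (th (b - 1)) = th (a + b) := by
  rw [tmul_th, tmul_th]
  unfold thMulB th
  rcases lt_trichotomy a (-1) with h | h | h
  · -- a < -1
    rw [if_neg (by omega : a ≠ -1), if_neg (by omega : ¬ 0 ≤ a),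
        if_neg (by omega : a - 1 ≠ -1), if_neg (by omega : ¬ 0 ≤ a - 1)]
    obtain ⟨n, hn⟩ : ∃ n : ℕ, a = -(n : ℤ) - 2 := ⟨(-a - 2).toNat, by omega⟩
    subst hn
    have e1 : tau (-(n : ℤ) - 2) = (n : ℤ) := by
      unfold tau; rw [abs_of_nonpos (by omega)]; ring
    have e2 : tau (-(n : ℤ) - 2 - 1) = (n : ℤ) + 1 := by
      unfold tau; rw [abs_of_nonpos (by omega)]; ring
    rw [e1, e2]
    have t1 : ((n : ℤ)).toNat = n := by omega
    have t2 : ((n : ℤ) + 1).toNat = n + 1 := by omega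
    rw [t1, t2]
    have h3 : ∀ k : ℕ, b - 1 - ((n : ℤ) + 1) + 2 * k = (b - n) - 2 + 2 * k := by
      intro k; ring
    simp only [h3]
    rw [key_s6 n (b - n)]
    have : -(n : ℤ) - 2 + b = (b - n) - 2 := by ring
    rw [this]
    abel
  · -- a = -1
    subst h
    rw [if_pos rfl, if_neg (by omega : (-1 : ℤ) - 1 ≠ -1),
        if_neg (by omega : ¬ (0:ℤ) ≤ -1 - 1)]
    have e2 : tau (-1 - 1) = 0 := by unfold tau; decide
    rw [e2]
    rw [show (-1 : ℤ) + b = b - 1 - 0 + 2 * ((0 : ℕ) : ℤ) by push_cast; ring]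
    simp
  · -- a ≥ 0
    rcases eq_or_lt_of_le (by omega : (0 : ℤ) ≤ a) with h0 | h0
    · -- a = 0
      rw [← h0]
      norm_num
    · -- a ≥ 1
      obtain ⟨n, hn⟩ : ∃ n : ℕ, a = (n : ℤ) + 1 := ⟨(a - 1).toNat, by omega⟩
      subst hn
      rw [if_neg (by omega : (n : ℤ) + 1 ≠ -1), if_pos (by omega : (0:ℤ) ≤ (n:ℤ) + 1),
          if_neg (by omega : (n : ℤ) + 1 - 1 ≠ -1),
          if_pos (by omega : (0:ℤ) ≤ (n:ℤ) + 1 - 1)]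
      have t1 : ((n : ℤ) + 1).toNat = n + 1 := by omega
      have t2 : ((n : ℤ) + 1 - 1).toNat = n := by omega
      rw [t1, t2, Finset.sum_range_succ]
      have h3 : ∀ k : ℕ, b - 1 - ((n : ℤ) + 1 - 1) + 2 * k = b - ((n : ℤ) + 1) + 2 * k := by
        intro k; ring
      simp only [h3]
      rw [show b - ((n : ℤ) + 1) + 2 * ((n + 1 : ℕ) : ℤ) = (n : ℤ) + 1 + b by push_cast; ring]
      abel
end

section
/- With tCH2 and tau as above, for all integers a, b: th_a * th_b - th_{a-2} * th_b = th_{b+a} + th_{b-a}. -/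
noncomputable def SS (n : ℕ) (j : ℤ) : ℤ →₀ ℤ :=
  ∑ k ∈ Finset.range (n + 1), Finsupp.single (j - (n : ℤ) + 2 * (k : ℤ)) (1 : ℤ)

lemma thMulB_nonneg (n : ℕ) (j : ℤ) : thMulB (n : ℤ) j = SS n j := by
  have h1 : (n : ℤ) ≠ -1 := by omega
  have h2 : (0 : ℤ) ≤ (n : ℤ) := by omega
  simp [thMulB, h1, h2, SS]

lemma thMulB_neg (n : ℕ) (j : ℤ) : thMulB (-(n : ℤ) - 2) j = -SS n j := by
  have h1 : (-(n : ℤ) - 2) ≠ -1 := by omega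
  have h2 : ¬ (0 : ℤ) ≤ (-(n : ℤ) - 2) := by omega
  have h3 : tau (-(n : ℤ) - 2) = (n : ℤ) := by
    simp only [tau]; rw [abs_of_nonpos (by omega)]; ring
  simp [thMulB, h1, h2, h3, SS]

lemma key_s7 (n : ℕ) (j : ℤ) :
    SS (n + 2) j = Finsupp.single (j - ((n : ℤ) + 2)) 1
      + Finsupp.single (j + ((n : ℤ) + 2)) 1 + SS n j := by
  unfold SS
  rw [show n + 2 + 1 = (n + 1) + 1 + 1 from rfl, Finset.sum_range_succ',
    Finset.sum_range_succ]
  push_cast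
  have e1 : ∀ k : ℕ, j - ((n : ℤ) + 2) + 2 * ((k : ℤ) + 1) = j - (n : ℤ) + 2 * (k : ℤ) := by
    intro k; ring
  simp only [e1]
  rw [show j - ((n : ℤ) + 2) + 2 * ((n : ℤ) + 1 + 1) = j + ((n : ℤ) + 2) by ring,
    show j - ((n : ℤ) + 2) + 0 = j - ((n : ℤ) + 2) by ring]
  abel

theorem th_mul_sub' (a b : ℤ) :
    tmul (th a) (th b) - tmul (th (a - 2)) (th b) = th (b + a) + th (b - a) := by
  rw [tmul_th, tmul_th]
  rcases le_or_gt 2 a with h | h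
  · obtain ⟨n, rfl⟩ : ∃ n : ℕ, a = (n : ℤ) + 2 := ⟨(a - 2).toNat, by omega⟩
    rw [show ((n : ℤ) + 2) = ((n + 2 : ℕ) : ℤ) by push_cast; ring,
      show ((n + 2 : ℕ) : ℤ) - 2 = ((n : ℕ) : ℤ) by push_cast; ring,
      thMulB_nonneg, thMulB_nonneg, key_s7]
    simp only [th]
    push_cast
    rw [show b + ((n : ℤ) + 2) = b + ((n:ℤ) + 2) from rfl,
      show b - ((n : ℤ) + 2) = b - ((n:ℤ) + 2) from rfl]
    abel
  rcases eq_or_lt_of_le (show a ≤ 1 by omega) with h1 | h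
  · subst_vars
    norm_num [thMulB, tau, Finset.sum_range_succ, th]
    rw [show b - 1 + 2 = b + 1 by ring]
    abel
  rcases eq_or_lt_of_le (show a ≤ 0 by omega) with h0 | h
  · subst_vars
    norm_num [thMulB, tau, Finset.sum_range_succ, th]
  rcases eq_or_lt_of_le (show a ≤ -1 by omega) with hm | h
  · subst_vars
    norm_num [thMulB, tau, Finset.sum_range_succ, th]
    rw [show b - 1 + 2 = b + 1 by ring]
    abel
  · obtain ⟨n, rfl⟩ : ∃ n : ℕ, a = -(n : ℤ) - 2 := ⟨(-a - 2).toNat, by omega⟩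
    rw [show (-(n : ℤ) - 2) - 2 = -((n + 2 : ℕ) : ℤ) - 2 by push_cast; ring,
      thMulB_neg, thMulB_neg, key_s7]
    simp only [th]
    rw [show b + (-(n : ℤ) - 2) = b - ((n:ℤ) + 2) by ring,
      show b - (-(n : ℤ) - 2) = b + ((n:ℤ) + 2) by ring]
    abel
end

section
/- Let L: tCH2 -> CH2 be the Z-linear map sending th_i to sgn(i+1)*h_{tau(i)}, where tau(i) = |i+1|-1, sgn(0) = 0, h_j denotes the basis of CH2 for j >= 0, and we interpret sgn(i+1)*h_{tau(i)} as 0 when i = -1. Then L is a ring homomorphism: L(x*y) = L(x)*L(y) for all x, y in tCH2. -/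
/-- Basis element `h_i` of the free ℤ-module `CH2 = ℕ →₀ ℤ`. -/
noncomputable def hb (i : ℕ) : ℕ →₀ ℤ := Finsupp.single i 1

/-- Product of basis elements of `CH2`: `h_i h_j = ∑_{k=0}^{min i j} h_{|j-i|+2k}`. -/
noncomputable def hMulB (i j : ℕ) : ℕ →₀ ℤ :=
  ∑ k ∈ Finset.range (min i j + 1), Finsupp.single (max i j - min i j + 2 * k) (1 : ℤ)

/-- The bilinear extension of `hMulB` to all of `CH2`. -/
noncomputable def hmul (x y : ℕ →₀ ℤ) : ℕ →₀ ℤ :=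
  x.sum fun i a => y.sum fun j b => (a * b) • hMulB i j

/-- The linear map `L : tCH2 → CH2`, `th_i ↦ sgn(i+1) • h_{tau i}`. -/
noncomputable def Lmap (x : ℤ →₀ ℤ) : ℕ →₀ ℤ :=
  x.sum fun i a => (a * (i + 1).sign) • Finsupp.single (tau i).toNat (1 : ℤ)

namespace Finsupp

variable {α β M : Type*} (R : Type*) [CommSemiring R] [AddCommMonoid M] [Module R M]

noncomputable def bilinearExtend (B : α → β → M) : (α →₀ R) →ₗ[R] (β →₀ R) →ₗ[R] M :=
  linearCombination R fun i => linearCombination R (B i)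

theorem bilinearExtend_apply (B : α → β → M) (x : α →₀ R) (y : β →₀ R) :
    bilinearExtend R B x y = x.sum fun i a => y.sum fun j b => (a * b) • B i j := by
  simp only [bilinearExtend, linearCombination_apply, Finsupp.sum, LinearMap.coe_sum,
    Finset.sum_apply, LinearMap.smul_apply, Finset.smul_sum, mul_smul]

theorem bilinearExtend_single (B : α → β → M) (i : α) (j : β) (a b : R) :
    bilinearExtend R B (single i a) (single j b) = (a * b) • B i j := by
  simp [bilinearExtend_apply]

end Finsupp

open Finsupp (bilinearExtend bilinearExtend_apply bilinearExtend_single)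

theorem tmul_eq_bilinearExtend (x y : ℤ →₀ ℤ) : tmul x y = bilinearExtend ℤ thMulB x y :=
  (bilinearExtend_apply ℤ thMulB x y).symm

theorem hmul_eq_bilinearExtend (x y : ℕ →₀ ℤ) : hmul x y = bilinearExtend ℤ hMulB x y :=
  (bilinearExtend_apply ℤ hMulB x y).symm

section AntisymmetricStrings

variable {M : Type*} [AddCommGroup M] {f : ℤ → M}

theorem sum_string_eq_neg_sum_reflect (hf : ∀ m, f (-2 - m) = -f m) (n : ℕ) (j : ℤ) :
    ∑ k ∈ Finset.range (n + 1), f (j - n + 2 * k)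
      = -∑ k ∈ Finset.range (n + 1), f (-2 - j - n + 2 * k) := by
  rw [← Finset.sum_range_reflect, ← Finset.sum_neg_distrib]
  refine Finset.sum_congr rfl fun k hk => ?_
  rw [← hf]
  have := Finset.mem_range.mp hk
  congr 1
  omega

theorem sum_string_eq_zero [IsAddTorsionFree M] (hf : ∀ m, f (-2 - m) = -f m) (d : ℕ) :
    ∑ k ∈ Finset.range d, f (-d + 2 * k) = 0 := by
  obtain _ | n := d
  · simp
  · have h := sum_string_eq_neg_sum_reflect hf n (-1)
    rw [show (-2 : ℤ) - -1 = -1 by norm_num, eq_comm, neg_eq_self] at h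
    convert h using 3
    push_cast
    ring

end AntisymmetricStrings

theorem tau_of_nonneg {m : ℤ} (hm : 0 ≤ m) : tau m = m := by
  rw [tau, abs_of_nonneg (by omega)]
  ring

theorem tau_of_neg {m : ℤ} (hm : m < 0) : tau m = -2 - m := by
  rw [tau, abs_of_nonpos (by omega)]
  ring

noncomputable def Lth (m : ℤ) : ℕ →₀ ℤ := (m + 1).sign • Finsupp.single (tau m).toNat 1

theorem Lmap_eq_linearCombination (x : ℤ →₀ ℤ) : Lmap x = Finsupp.linearCombination ℤ Lth x := by
  rw [Finsupp.linearCombination_apply]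
  exact Finsupp.sum_congr fun i _ => mul_smul _ _ _

theorem Lth_neg_two_sub (m : ℤ) : Lth (-2 - m) = -Lth m := by
  rw [Lth, Lth, tau, tau, show -2 - m + 1 = -(m + 1) by ring, Int.sign_neg, abs_neg, neg_smul]

theorem Lth_of_nonneg {m : ℤ} (hm : 0 ≤ m) : Lth m = Finsupp.single m.toNat 1 := by
  rw [Lth, tau_of_nonneg hm, Int.sign_eq_one_of_pos (by omega), one_smul]

theorem sum_Lth_string_of_nonneg (n : ℕ) {j : ℤ} (hj : 0 ≤ j) :
    ∑ k ∈ Finset.range (n + 1), Lth (j - n + 2 * k) = hMulB n j.toNat := by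
  rcases le_or_gt (n : ℤ) j with hnj | hjn
  · rw [hMulB, min_eq_left (by omega), max_eq_right (by omega)]
    refine Finset.sum_congr rfl fun k _ => ?_
    rw [Lth_of_nonneg (by omega)]
    congr 1
    omega
  · rw [show n + 1 = (n - j.toNat) + (j.toNat + 1) by omega, Finset.sum_range_add]
    have hcancel : ∑ k ∈ Finset.range (n - j.toNat), Lth (j - n + 2 * k) = 0 := by
      rw [← sum_string_eq_zero Lth_neg_two_sub (n - j.toNat)]
      refine Finset.sum_congr rfl fun k _ => ?_
      congr 1
      omega
    rw [hcancel, zero_add, hMulB, min_eq_right (by omega), max_eq_left (by omega)]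
    refine Finset.sum_congr rfl fun k _ => ?_
    rw [Lth_of_nonneg (by omega)]
    congr 1
    omega

theorem sum_Lth_string (n : ℕ) (j : ℤ) :
    ∑ k ∈ Finset.range (n + 1), Lth (j - n + 2 * k) = (j + 1).sign • hMulB n (tau j).toNat := by
  rcases lt_trichotomy j (-1) with hj | rfl | hj
  · rw [sum_string_eq_neg_sum_reflect Lth_neg_two_sub, sum_Lth_string_of_nonneg n (by omega),
      tau_of_neg (by omega), Int.sign_eq_neg_one_of_neg (by omega), neg_one_smul]
  · rw [neg_add_cancel, Int.sign_zero, zero_smul]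
    convert sum_string_eq_zero Lth_neg_two_sub (n + 1) using 3
    push_cast
    ring
  · rw [sum_Lth_string_of_nonneg n (by omega), tau_of_nonneg (by omega),
      Int.sign_eq_one_of_pos (by omega), one_smul]

theorem thMulB_eq (i j : ℤ) :
    thMulB i j = (i + 1).sign • ∑ k ∈ Finset.range ((tau i).toNat + 1),
      Finsupp.single (j - (tau i).toNat + 2 * (k : ℤ)) (1 : ℤ) := by
  rw [thMulB]
  split_ifs with h₁ h₂
  · simp [h₁]
  · rw [tau_of_nonneg h₂, Int.sign_eq_one_of_pos (by omega), one_smul, Int.toNat_of_nonneg h₂]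
  · rw [Int.toNat_of_nonneg (by rw [tau_of_neg (by omega)]; omega),
      Int.sign_eq_neg_one_of_neg (by omega), neg_one_smul]

theorem Lmap_thMulB (i j : ℤ) :
    Lmap (thMulB i j) = ((i + 1).sign * (j + 1).sign) • hMulB (tau i).toNat (tau j).toNat := by
  simp only [Lmap_eq_linearCombination, thMulB_eq, map_smul, map_sum,
    Finsupp.linearCombination_single, one_smul, sum_Lth_string, mul_smul]

theorem Lmap_mul (x y : ℤ →₀ ℤ) : Lmap (tmul x y) = hmul (Lmap x) (Lmap y) := by
  have h : (bilinearExtend ℤ thMulB).compr₂ (Finsupp.linearCombination ℤ Lth) =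
      (bilinearExtend ℤ hMulB).compl₁₂ (Finsupp.linearCombination ℤ Lth)
        (Finsupp.linearCombination ℤ Lth) := by
    ext i j
    simp [Lth, bilinearExtend_single, ← Lmap_eq_linearCombination, Lmap_thMulB]
  simpa only [tmul_eq_bilinearExtend, hmul_eq_bilinearExtend, Lmap_eq_linearCombination,
    LinearMap.compr₂_apply, LinearMap.compl₁₂_apply]
    using LinearMap.congr_fun₂ h x y
end

section
/- The kernel of the ring homomorphism L: tCH2 -> CH2 is the Z-submodule generated by th_{-1} together with the elements th_{-i} + th_{i-2} for integers i >= 1. -/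
/-!
The `n`-th coefficient of `L x` is `x n - x (-2 - n)`, so the kernel consists of the `x`
symmetric under the reflection `σ : i ↦ -2 - i` about `-1`. Such an `x` is
`x (-1) • th (-1) + y + σ y` with `y` the restriction of `x` to `i ≥ 0`, and `y + σ y` is an
integer combination of the elements `th i + th (-2 - i)`, each of which is a generator.
-/

noncomputable def LmapLinear : (ℤ →₀ ℤ) →ₗ[ℤ] (ℕ →₀ ℤ) :=
  Finsupp.linearCombination ℤ fun i => (i + 1).sign • hb (tau i).toNat

theorem coe_LmapLinear : ⇑LmapLinear = Lmap := by
  funext x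
  rw [LmapLinear, Finsupp.linearCombination_apply, Lmap]
  exact Finsupp.sum_congr fun i _ => by rw [hb, mul_smul]

theorem Lmap_apply (x : ℤ →₀ ℤ) (n : ℕ) : Lmap x n = x n - x (-2 - n) := by
  rw [← coe_LmapLinear]
  induction x using Finsupp.induction_linear with
  | zero => simp
  | add f g hf hg => simp only [map_add, Finsupp.add_apply, hf, hg]; ring
  | single i a =>
    simp only [LmapLinear, Finsupp.linearCombination_single, hb, tau, Finsupp.smul_apply,
      Finsupp.single_apply, smul_eq_mul]
    rcases lt_trichotomy i (-1) with h | rfl | h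
    · rw [abs_of_neg (by omega), Int.sign_eq_neg_one_of_neg (by omega)]
      grind
    · grind
    · rw [abs_of_pos (by omega), Int.sign_eq_one_of_pos (by omega)]
      grind

theorem Lmap_eq_zero_iff (x : ℤ →₀ ℤ) : Lmap x = 0 ↔ ∀ n : ℕ, x n = x (-2 - n) := by
  simp only [Finsupp.ext_iff, Lmap_apply, Finsupp.coe_zero, Pi.zero_apply, sub_eq_zero]

def kerGenerators : Set (ℤ →₀ ℤ) :=
  {th (-1)} ∪ {f | ∃ i : ℤ, 1 ≤ i ∧ f = th (-i) + th (i - 2)}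

theorem kerGenerators_subset_ker : kerGenerators ⊆ LinearMap.ker LmapLinear := by
  rintro _ (rfl | ⟨i, hi, rfl⟩) <;>
  · rw [SetLike.mem_coe, LinearMap.mem_ker, coe_LmapLinear, Lmap_eq_zero_iff]
    intro n
    simp only [th, Finsupp.add_apply, Finsupp.single_apply]
    grind

theorem th_add_th_neg_two_sub_mem_span (i : ℤ) :
    th i + th (-2 - i) ∈ Submodule.span ℤ kerGenerators := by
  apply Submodule.subset_span
  right
  rcases le_or_gt (-1) i with h | h
  · exact ⟨i + 2, by omega, by rw [add_comm]; congr 2 <;> ring⟩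
  · exact ⟨-i, by omega, by congr 2 <;> ring⟩

theorem add_equivMapDomain_subLeft_mem_span (y : ℤ →₀ ℤ) :
    y + y.equivMapDomain (Equiv.subLeft (-2)) ∈ Submodule.span ℤ kerGenerators := by
  induction y using Finsupp.induction_linear with
  | zero => simp
  | add f g hf hg =>
    rw [Finsupp.equivMapDomain_eq_mapDomain, Finsupp.mapDomain_add, add_add_add_comm,
      ← Finsupp.equivMapDomain_eq_mapDomain, ← Finsupp.equivMapDomain_eq_mapDomain]
    exact Submodule.add_mem _ hf hg
  | single i a =>
    rw [Finsupp.equivMapDomain_single, Equiv.subLeft_apply, ← Finsupp.smul_single_one i a,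
      ← Finsupp.smul_single_one (-2 - i) a, ← smul_add]
    exact Submodule.smul_mem _ a (th_add_th_neg_two_sub_mem_span i)

theorem eq_single_add_filter_add_equivMapDomain_subLeft (x : ℤ →₀ ℤ)
    (hx : ∀ n : ℕ, x n = x (-2 - n)) :
    x = Finsupp.single (-1) (x (-1)) +
      (x.filter (0 ≤ ·) + (x.filter (0 ≤ ·)).equivMapDomain (Equiv.subLeft (-2))) := by
  ext j
  simp only [Finsupp.add_apply, Finsupp.equivMapDomain_apply, Equiv.symm_subLeft,
    Equiv.subLeft_apply, Finsupp.filter_apply, Finsupp.single_apply]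
  rcases lt_trichotomy j (-1) with h | rfl | h
  · have := hx (-2 - j).toNat
    rw [show ((-2 - j).toNat : ℤ) = -2 - j by omega, sub_sub_cancel] at this
    split_ifs <;> omega
  · simp
  · split_ifs <;> omega

theorem ker_LmapLinear : LinearMap.ker LmapLinear = Submodule.span ℤ kerGenerators := by
  refine le_antisymm (fun x hx => ?_) (Submodule.span_le.mpr kerGenerators_subset_ker)
  rw [LinearMap.mem_ker, coe_LmapLinear, Lmap_eq_zero_iff] at hx
  rw [eq_single_add_filter_add_equivMapDomain_subLeft x hx, ← Finsupp.smul_single_one]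
  exact Submodule.add_mem _
    (Submodule.smul_mem _ _ (Submodule.subset_span (Or.inl rfl)))
    (add_equivMapDomain_subLeft_mem_span _)

theorem ker_Lmap_span :
    {x : ℤ →₀ ℤ | Lmap x = 0} =
      (Submodule.span ℤ
        ({th (-1)} ∪ {f | ∃ i : ℤ, 1 ≤ i ∧ f = th (-i) + th (i - 2)}) : Set (ℤ →₀ ℤ)) := by
  rw [← coe_LmapLinear]
  exact congrArg SetLike.coe ker_LmapLinear
end

section
/- In tCH2, define U(a,b,c) = sgn(a) * sum_{j=0}^{|a|-1} th_{c-b-|a|+2j} for integers a, b, c, with U(0,b,c) = 0. Then for all integers a, b, c: th_{a+b} * th_c - th_b * th_{a+c} = U(a,b,c). -/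
/-- `U(a,b,c) = sgn(a) • ∑_{j=0}^{|a|-1} th_{c-b-|a|+2j}` (so `U(0,b,c) = 0`). -/
noncomputable def U (a b c : ℤ) : ℤ →₀ ℤ :=
  a.sign • ∑ j ∈ Finset.range a.natAbs, Finsupp.single (c - b - |a| + 2 * (j : ℤ)) (1 : ℤ)

lemma sum_apply' (n : ℕ) (base x : ℤ) :
    (∑ k ∈ Finset.range n, Finsupp.single (base + 2*(k:ℤ)) (1:ℤ)) x =
    if base ≤ x ∧ x < base + 2*n ∧ (x - base) % 2 = 0 then 1 else 0 := by
  induction n with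
  | zero => simp only [Finset.range_zero, Finset.sum_empty, Finsupp.coe_zero, Pi.zero_apply,
      Nat.cast_zero]; split_ifs <;> omega
  | succ n ih =>
    rw [Finset.sum_range_succ, Finsupp.add_apply, ih, Finsupp.single_apply]
    push_cast
    split_ifs <;> omega

theorem th_mul_U (a b c : ℤ) :
    tmul (th (a + b)) (th c) - tmul (th b) (th (a + c)) = U a b c := by
  rw [tmul_th, tmul_th]
  ext x
  simp only [Finsupp.sub_apply, U, Finsupp.smul_apply, smul_eq_mul, thMulB, tau,
    Int.abs_eq_natAbs]
  rcases lt_trichotomy a 0 with ha | ha | ha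
  · rw [Int.sign_eq_neg_one_of_neg ha]
    split_ifs <;>
      simp only [Finsupp.zero_apply, Finsupp.neg_apply, sum_apply'] <;>
      (try split_ifs) <;> omega
  · subst ha
    rw [Int.sign_zero]
    simp only [zero_mul, zero_add]
    split_ifs <;>
      simp only [Finsupp.zero_apply, Finsupp.neg_apply, sum_apply'] <;>
      (try split_ifs) <;> omega
  · rw [Int.sign_eq_one_of_pos ha]
    split_ifs <;>
      simp only [Finsupp.zero_apply, Finsupp.neg_apply, sum_apply'] <;>
      (try split_ifs) <;> omega
end

section
/- For all integers a, b, c1, c2, the element U(a, b, c1) + U(a, c1+c2-b, c2) of tCH2 lies in the kernel of L, where U(a,b,c) = sgn(a) * sum_{j=0}^{|a|-1} th_{c-b-|a|+2j}. -/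
noncomputable def g (i : ℤ) : ℕ →₀ ℤ := (i + 1).sign • Finsupp.single (tau i).toNat 1

noncomputable def Llin : (ℤ →₀ ℤ) →ₗ[ℤ] (ℕ →₀ ℤ) :=
  Finsupp.lsum ℤ fun i => LinearMap.toSpanSingleton ℤ _ (g i)

lemma Llin_single (i : ℤ) : Llin (Finsupp.single i 1) = g i := by
  rw [Llin, Finsupp.lsum_single, LinearMap.toSpanSingleton_apply, one_smul]

lemma Lmap_eq (x : ℤ →₀ ℤ) : Lmap x = Llin x := by
  rw [Lmap, Llin]
  simp [Finsupp.lsum_apply, Finsupp.sum, g, mul_smul, LinearMap.toSpanSingleton_apply]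

lemma g_pair (e : ℤ) : g e + g (-e - 2) = 0 := by
  have h1 : tau (-e - 2) = tau e := by
    unfold tau
    have : -e - 2 + 1 = -(e + 1) := by ring
    rw [this, abs_neg]
  have h2 : (-e - 2 + 1).sign = -(e + 1).sign := by
    have : -e - 2 + 1 = -(e + 1) := by ring
    rw [this, Int.sign_neg]
  rw [g, g, h1, h2, neg_smul, add_neg_cancel]

lemma sum_pair (n : ℕ) (e : ℤ) :
    (∑ j ∈ Finset.range n, g (e + 2 * (j : ℤ)))
      + (∑ j ∈ Finset.range n, g (-e - 2 * n + 2 * (j : ℤ))) = 0 := by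
  rw [← Finset.sum_range_reflect (fun j => g (-e - 2 * n + 2 * (j : ℤ))) n,
    ← Finset.sum_add_distrib]
  apply Finset.sum_eq_zero
  intro j hj
  have hj' : j < n := Finset.mem_range.mp hj
  have hc : ((n - 1 - j : ℕ) : ℤ) = (n : ℤ) - 1 - j := by
    omega
  have harg : -e - 2 * n + 2 * ((n - 1 - j : ℕ) : ℤ) = -(e + 2 * j) - 2 := by
    rw [hc]; ring
  rw [harg]
  exact g_pair (e + 2 * j)

theorem U_ker (a b c1 c2 : ℤ) : Lmap (U a b c1 + U a (c1 + c2 - b) c2) = 0 := by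
  rw [Lmap_eq, map_add]
  simp only [U, map_zsmul, map_sum, Llin_single]
  rw [← smul_add]
  have habs : |a| = (a.natAbs : ℤ) := Int.abs_eq_natAbs a
  have h1 : ∀ j : ℤ, c1 - b - |a| + 2 * j = (c1 - b - (a.natAbs : ℤ)) + 2 * j := by
    intro j; rw [habs]
  have h2 : ∀ j : ℤ, c2 - (c1 + c2 - b) - |a| + 2 * j
      = -(c1 - b - (a.natAbs : ℤ)) - 2 * (a.natAbs : ℤ) + 2 * j := by
    intro j; rw [habs]; ring
  simp only [h1, h2]
  rw [sum_pair a.natAbs (c1 - b - (a.natAbs : ℤ)), smul_zero]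
end

section
/- A radius-value tree of height n is defined recursively: a height-0 tree is a single vertex labeled by an even integer (its value); a height-(n+1) tree is a tuple (l, T1, T2, T3) with even integer value l and height-n radius-value trees T1, T2, T3 satisfying |l - val(T1) - val(T3)| <= tau(val(T2)) where tau(i)=|i+1|-1. RV_{n;2} is the set of height-n radius-value trees all of whose leaves are labeled 2. The involution Inv is defined by Inv(T)=T for height 0, and Inv((val(T1)+val(T3)+j, T1, T2, T3)) = (val(Inv(T1))+val(Inv(T3))-j, Inv(T1), T2, Inv(T3)). Then: for every T in RV_{n;2} with val(T) = 2^(n+1) + j, one has val(Inv(T)) = 2^(n+1) - j. -/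
/-- Plane ternary trees of height `n` with integer-labeled vertices. -/
inductive RVT : ℕ → Type
  | leaf (l : ℤ) : RVT 0
  | node {n : ℕ} (l : ℤ) (T1 T2 T3 : RVT n) : RVT (n + 1)

/-- The value (root label) of a tree. -/
def RVT.val : ∀ {n : ℕ}, RVT n → ℤ
  | _, .leaf l => l
  | _, .node l _ _ _ => l

/-- The radius-value tree condition: all labels are even, and at each internal
vertex `(l, T1, T2, T3)` we have `|l - val T1 - val T3| ≤ tau (val T2)`. -/
def RVT.valid : ∀ {n : ℕ}, RVT n → Prop
  | _, .leaf l => Even l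
  | _, .node l T1 T2 T3 =>
      Even l ∧ |l - T1.val - T3.val| ≤ tau T2.val ∧ T1.valid ∧ T2.valid ∧ T3.valid

/-- Every leaf is labeled `2`. -/
def RVT.leaves2 : ∀ {n : ℕ}, RVT n → Prop
  | _, .leaf l => l = 2
  | _, .node _ T1 T2 T3 => T1.leaves2 ∧ T2.leaves2 ∧ T3.leaves2

/-- Membership in `RV_{n;2}`. -/
def RVT.mem2 {n : ℕ} (T : RVT n) : Prop := T.valid ∧ T.leaves2

/-- The involution `Inv`. -/
def RVT.inv : ∀ {n : ℕ}, RVT n → RVT n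
  | _, .leaf l => .leaf l
  | _, .node l T1 T2 T3 =>
      .node (T1.inv.val + T3.inv.val - (l - T1.val - T3.val)) T1.inv T2 T3.inv

lemma inv_val_sum : ∀ {n : ℕ} (T : RVT n), T.mem2 → T.val + T.inv.val = 2 ^ (n + 2)
  | _, .leaf l, h => by
    simp only [RVT.mem2, RVT.leaves2] at h
    simp [RVT.val, RVT.inv, h.2]
  | _, .node l T1 T2 T3, h => by
    obtain ⟨⟨_, _, hv1, hv2, hv3⟩, hl1, hl2, hl3⟩ := h
    have h1 := inv_val_sum T1 ⟨hv1, hl1⟩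
    have h3 := inv_val_sum T3 ⟨hv3, hl3⟩
    simp only [RVT.val, RVT.inv] at *
    ring_nf
    ring_nf at h1 h3
    omega

theorem inv_val {n : ℕ} (T : RVT n) (hT : T.mem2) (j : ℤ)
    (h : T.val = 2 ^ (n + 1) + j) : T.inv.val = 2 ^ (n + 1) - j := by
  have := inv_val_sum T hT
  have : (2:ℤ) ^ (n + 2) = 2 ^ (n + 1) + 2 ^ (n + 1) := by ring
  omega
end

section
/- With radius-value trees as defined, the involution Inv preserves membership in RV_{n;2} and is an involution: Inv(Inv(T)) = T for all T in RV_{n;2}. -/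
theorem inv_involution {n : ℕ} (T : RVT n) (hT : T.mem2) :
    T.inv.mem2 ∧ T.inv.inv = T := by
  induction T with
  | leaf l => exact ⟨hT, rfl⟩
  | node l T1 T2 T3 ih1 ih2 ih3 =>
    obtain ⟨⟨hev, hle, hv1, hv2, hv3⟩, hl1, hl2, hl3⟩ := hT
    obtain ⟨⟨hV1, hL1⟩, hi1⟩ := ih1 ⟨hv1, hl1⟩
    obtain ⟨⟨hV3, hL3⟩, hi3⟩ := ih3 ⟨hv3, hl3⟩
    have e1 : Even (RVT.val (RVT.inv T1)) := by
      have := hV1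
      cases h1 : T1.inv with
      | leaf a => rw [h1] at this; exact this
      | node a b c d => rw [h1] at this; exact this.1
    have e3 : Even (RVT.val (RVT.inv T3)) := by
      have := hV3
      cases h3 : T3.inv with
      | leaf a => rw [h3] at this; exact this
      | node a b c d => rw [h3] at this; exact this.1
    have ev1 : Even T1.val := by
      cases T1 with
      | leaf a => exact hv1
      | node a b c d => exact hv1.1
    have ev3 : Even T3.val := by
      cases T3 with
      | leaf a => exact hv3
      | node a b c d => exact hv3.1
    refine ⟨⟨⟨?_, ?_, hV1, hv2, hV3⟩, hL1, hl2, hL3⟩, ?_⟩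
    · exact (e1.add e3).sub ((hev.sub ev1).sub ev3)
    · show |T1.inv.val + T3.inv.val - (l - T1.val - T3.val) - T1.inv.val - T3.inv.val|
          ≤ tau T2.val
      rw [show T1.inv.val + T3.inv.val - (l - T1.val - T3.val) - T1.inv.val - T3.inv.val
          = -(l - T1.val - T3.val) from by ring, abs_neg]
      exact hle
    · show RVT.node (T1.inv.inv.val + T3.inv.inv.val
          - (T1.inv.val + T3.inv.val - (l - T1.val - T3.val) - T1.inv.val - T3.inv.val))
          T1.inv.inv T2 T3.inv.inv = RVT.node l T1 T2 T3
      rw [hi1, hi3]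
      congr 1
      ring
end

section
/- The maximum value attained by a tree in RV_{n;2} is 2*3^n, and the minimum is 2^(n+1) - 2(3^n - 2^n); equivalently, every T in RV_{n;2} satisfies |val(T) - 2^(n+1)| <= 2(3^n - 2^n), and both bounds are attained. -/
/-- The maximizing tree. -/
def Mx : ∀ n : ℕ, RVT n
  | 0 => .leaf 2
  | n + 1 => .node (2 * 3 ^ (n + 1)) (Mx n) (Mx n) (Mx n)

/-- The minimizing tree. -/
def Mn : ∀ n : ℕ, RVT n
  | 0 => .leaf 2
  | n + 1 => .node (2 ^ (n + 3) - 2 * 3 ^ (n + 1)) (Mn n) (Mx n) (Mn n)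

lemma Mx_val (n : ℕ) : (Mx n).val = 2 * 3 ^ n := by
  cases n <;> rfl

lemma Mn_val (n : ℕ) : (Mn n).val = 2 ^ (n + 1) - 2 * (3 ^ n - 2 ^ n) := by
  cases n with
  | zero => rfl
  | succ m => show (2:ℤ) ^ (m + 3) - 2 * 3 ^ (m + 1) = _; ring

lemma Mx_mem2 (n : ℕ) : (Mx n).mem2 := by
  induction n with
  | zero => exact ⟨⟨1, rfl⟩, rfl⟩
  | succ m ih =>
    refine ⟨⟨⟨3 ^ (m + 1), by ring⟩, ?_, ih.1, ih.1, ih.1⟩, ih.2, ih.2, ih.2⟩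
    rw [Mx_val]
    have h3 : (0:ℤ) ≤ 2 * 3 ^ m := by positivity
    simp only [tau]
    rw [abs_of_nonneg (by nlinarith [pow_succ (3:ℤ) m]), abs_of_nonneg (by linarith)]
    nlinarith [pow_succ (3:ℤ) m]

lemma Mn_mem2 (n : ℕ) : (Mn n).mem2 := by
  induction n with
  | zero => exact ⟨⟨1, rfl⟩, rfl⟩
  | succ m ih =>
    refine ⟨⟨⟨2 ^ (m + 2) - 3 ^ (m + 1), by ring⟩, ?_, ih.1, (Mx_mem2 m).1, ih.1⟩,
      ih.2, (Mx_mem2 m).2, ih.2⟩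
    rw [Mn_val, Mx_val]
    simp only [tau]
    have e1 : (2:ℤ) ^ (m + 3) - 2 * 3 ^ (m + 1) - (2 ^ (m + 1) - 2 * (3 ^ m - 2 ^ m))
        - (2 ^ (m + 1) - 2 * (3 ^ m - 2 ^ m)) = -(2 * 3 ^ m) := by ring
    rw [e1, abs_neg, abs_of_nonneg (by positivity),
      abs_of_nonneg (by positivity)]
    omega

theorem val_bounds (n : ℕ) :
    (∀ T : RVT n, T.mem2 → |T.val - 2 ^ (n + 1)| ≤ 2 * (3 ^ n - 2 ^ n)) ∧
    (∃ T : RVT n, T.mem2 ∧ T.val = 2 * 3 ^ n) ∧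
    (∃ T : RVT n, T.mem2 ∧ T.val = 2 ^ (n + 1) - 2 * (3 ^ n - 2 ^ n)) := by
  refine ⟨?_, ⟨Mx n, Mx_mem2 n, Mx_val n⟩, ⟨Mn n, Mn_mem2 n, Mn_val n⟩⟩
  induction n with
  | zero =>
    intro T hT
    cases T with
    | leaf l =>
      have : l = 2 := hT.2
      simp [RVT.val, this]
  | succ m ih =>
    intro T hT
    cases T with
    | node l T1 T2 T3 =>
      obtain ⟨⟨_, hmid, v1, v2, v3⟩, l1, l2, l3⟩ := hT
      have h1 := ih T1 ⟨v1, l1⟩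
      have h2 := ih T2 ⟨v2, l2⟩
      have h3 := ih T3 ⟨v3, l3⟩
      rw [abs_le] at h1 h2 h3 ⊢
      have htau : tau T2.val ≤ 2 * 3 ^ m := by
        have : |T2.val + 1| ≤ 2 * 3 ^ m + 1 := by
          rw [abs_le]
          have e2 : (2:ℤ) ^ (m + 1) = 2 * 2 ^ m := by ring
          have hp : (0:ℤ) ≤ 2 ^ m := by positivity
          constructor <;> nlinarith [h2.1, h2.2]
        simp only [tau]; linarith
      have habs := abs_le.mp hmid
      simp only [RVT.val] at *
      have e2 : (2:ℤ) ^ (m + 1 + 1) = 2 * 2 ^ (m + 1) := by ring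
      have e2' : (2:ℤ) ^ (m + 1) = 2 * 2 ^ m := by ring
      have e3 : (3:ℤ) ^ (m + 1) = 3 * 3 ^ m := by ring
      constructor <;> linarith [habs.1, habs.2, h1.1, h1.2, h3.1, h3.2]
end
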